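/- Let ι and κ be finite nonempty index types, let ρ : Matrix (ι × κ) (ι × κ) ℂ be a positive definite Hermitian matrix with Matrix.trace ρ = 1 whose marginals ρ_A := ptr₂ ρ and ρ_B := ptr₁ ρ are positive definite, and let σ_A : Matrix ι ι ℂ and σ_B : Matrix κ κ ℂ be positive definite Hermitian matrices with trace 1. Then the total relative entropy to the product σ_A ⊗ₖ σ_B decomposes as S(ρ ‖ σ_A ⊗ₖ σ_B) = S(ρ ‖ ρ_A ⊗ₖ ρ_B) + S(ρ_A ‖ σ_A) + S(ρ_B ‖ σ_B). -/

import Mathlib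

open Matrix Kronecker
open scoped ComplexOrder

/-- `matLog ρ` is `Real.log` applied to a Hermitian matrix `ρ` through the
continuous functional calculus (`Matrix.IsHermitian.cfc`); junk value `0` on
non-Hermitian matrices. -/
noncomputable def matLog {n : Type*} [Fintype n] [DecidableEq n]
    (ρ : Matrix n n ℂ) : Matrix n n ℂ :=
  if h : ρ.IsHermitian then h.cfc Real.log else 0

/-- The von Neumann entropy `S(ρ) = -Re (tr (ρ log ρ))`. -/
noncomputable def vnEntropy {n : Type*} [Fintype n] [DecidableEq n]
    (ρ : Matrix n n ℂ) : ℝ :=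
  -(Matrix.trace (ρ * matLog ρ)).re

/-- The quantum relative entropy `S(ρ‖σ) = Re (tr (ρ (log ρ - log σ)))`. -/
noncomputable def relEnt {n : Type*} [Fintype n] [DecidableEq n]
    (ρ σ : Matrix n n ℂ) : ℝ :=
  (Matrix.trace (ρ * (matLog ρ - matLog σ))).re

/-- Partial trace over the second tensor factor. -/
noncomputable def ptr₂ {ι κ : Type*} [Fintype κ]
    (M : Matrix (ι × κ) (ι × κ) ℂ) : Matrix ι ι ℂ :=
  Matrix.of fun i i' => ∑ k, M (i, k) (i', k)

/-- Partial trace over the first tensor factor. -/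
noncomputable def ptr₁ {ι κ : Type*} [Fintype ι]
    (M : Matrix (ι × κ) (ι × κ) ℂ) : Matrix κ κ ℂ :=
  Matrix.of fun k k' => ∑ i, M (i, k) (i, k')

/-!
If `A = U diag(a) U*` and `B = V diag(b) V*`, then `A ⊗ B = (U ⊗ V) diag(aᵢ bₖ) (U ⊗ V)*`, and
`log (aᵢ bₖ) = log aᵢ + log bₖ` gives `log (A ⊗ B) = log A ⊗ 1 + 1 ⊗ log B`. Paired with `ρ`, the
two summands only see the marginals: `tr (ρ (X ⊗ 1)) = tr (ρ_A X)` and `tr (ρ (1 ⊗ Y)) = tr (ρ_B Y)`.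
Hence `tr (ρ log (σ_A ⊗ σ_B)) = tr (ρ_A log σ_A) + tr (ρ_B log σ_B)`, likewise for `ρ_A ⊗ ρ_B`,
and the decomposition is a rearrangement of the resulting terms.
-/

open Unitary Polynomial

section FunctionalCalculus

variable {n 𝕜 : Type*} [DecidableEq n] [RCLike 𝕜]

lemma isHermitian_diagonal_ofReal (d : n → ℝ) :
    (diagonal (RCLike.ofReal ∘ d) : Matrix n n 𝕜).IsHermitian :=
  isHermitian_diagonal_of_self_adjoint _ (by ext; simp)

variable [Fintype n]

lemma matLog_eq_cfc (M : Matrix n n ℂ) : matLog M = cfc Real.log M := by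
  unfold matLog
  split_ifs with h
  · exact (h.cfc_eq _).symm
  · exact (cfc_apply_of_not_predicate M h).symm

lemma Matrix.IsHermitian.matLog_eq {A : Matrix n n ℂ} (hA : A.IsHermitian) :
    matLog A = conjStarAlgAut ℂ (Matrix n n ℂ) hA.eigenvectorUnitary
      (diagonal (RCLike.ofReal ∘ Real.log ∘ hA.eigenvalues)) := by
  rw [matLog, dif_pos hA]
  rfl

lemma cfc_conjStarAlgAut (u : unitary (Matrix n n 𝕜)) (f : ℝ → ℝ) {a : Matrix n n 𝕜}
    (ha : a.IsHermitian) :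
    cfc f (conjStarAlgAut 𝕜 _ u a) = conjStarAlgAut 𝕜 _ u (cfc f a) := by
  refine (StarAlgHomClass.map_cfc (conjStarAlgAut 𝕜 _ u) f a ?_ ?_ ha ?_).symm
  · exact (ha.spectrum_real_eq_range_eigenvalues ▸ Set.finite_range _).continuousOn f
  · exact (continuous_const.matrix_mul continuous_id).matrix_mul continuous_const
  · exact ha.isSelfAdjoint.conjugate _

lemma cfc_diagonal_ofReal (f : ℝ → ℝ) (d : n → ℝ) :
    cfc f (diagonal (RCLike.ofReal ∘ d) : Matrix n n 𝕜) = diagonal (RCLike.ofReal ∘ f ∘ d) := by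
  have hD : IsSelfAdjoint (diagonal (RCLike.ofReal ∘ d) : Matrix n n 𝕜) :=
    isHermitian_diagonal_ofReal d
  have hspec : spectrum ℝ (diagonal (RCLike.ofReal ∘ d) : Matrix n n 𝕜) = Set.range d := by
    rw [← spectrum.preimage_algebraMap 𝕜, spectrum_diagonal]
    ext x
    simp [RCLike.algebraMap_eq_ofReal]
  set p := Lagrange.interpolate (Finset.univ.image d) id f
  have hp : ∀ i, p.eval (d i) = f (d i) := fun i =>
    Lagrange.eval_interpolate_at_node f Function.injective_id.injOn (by simp)
  calc cfc f (diagonal (RCLike.ofReal ∘ d) : Matrix n n 𝕜)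
      = cfc p.eval (diagonal (RCLike.ofReal ∘ d) : Matrix n n 𝕜) :=
        cfc_congr (by rw [hspec]; rintro _ ⟨i, rfl⟩; exact (hp i).symm)
    _ = aeval (diagonal (RCLike.ofReal ∘ d) : Matrix n n 𝕜) p := cfc_polynomial p _
    _ = diagonal fun i => aeval (algebraMap ℝ 𝕜 (d i)) p := by
        rw [← diagonalAlgHom_apply ℝ, aeval_algHom_apply, aeval_pi_apply]; rfl
    _ = diagonal (RCLike.ofReal ∘ f ∘ d) := by
        simp_rw [aeval_algebraMap_apply_eq_algebraMap_eval, hp]; rfl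

end FunctionalCalculus

section Kronecker

variable {ι κ 𝕜 : Type*} [Fintype ι] [Fintype κ] [DecidableEq ι] [DecidableEq κ] [RCLike 𝕜]

def unitaryKronecker (u : unitary (Matrix ι ι 𝕜)) (v : unitary (Matrix κ κ 𝕜)) :
    unitary (Matrix (ι × κ) (ι × κ) 𝕜) :=
  ⟨u ⊗ₖ v, kronecker_mem_unitary u.2 v.2⟩

lemma conjStarAlgAut_unitaryKronecker (u : unitary (Matrix ι ι 𝕜))
    (v : unitary (Matrix κ κ 𝕜)) (X : Matrix ι ι 𝕜) (Y : Matrix κ κ 𝕜) :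
    conjStarAlgAut 𝕜 (Matrix (ι × κ) (ι × κ) 𝕜) (unitaryKronecker u v) (X ⊗ₖ Y) =
      conjStarAlgAut 𝕜 (Matrix ι ι 𝕜) u X ⊗ₖ conjStarAlgAut 𝕜 (Matrix κ κ 𝕜) v Y := by
  simp only [conjStarAlgAut_apply, unitaryKronecker, star_eq_conjTranspose, conjTranspose_kronecker,
    mul_kronecker_mul]

lemma matLog_kronecker {A : Matrix ι ι ℂ} {B : Matrix κ κ ℂ} (hA : A.PosDef) (hB : B.PosDef) :
    matLog (A ⊗ₖ B) = matLog A ⊗ₖ 1 + 1 ⊗ₖ matLog B := by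
  set a := hA.1.eigenvalues
  set b := hB.1.eigenvalues
  set w := unitaryKronecker hA.1.eigenvectorUnitary hB.1.eigenvectorUnitary
  have hAB : A ⊗ₖ B = conjStarAlgAut ℂ (Matrix (ι × κ) (ι × κ) ℂ) w
      (diagonal (RCLike.ofReal ∘ fun p => a p.1 * b p.2)) := by
    conv_lhs => rw [hA.1.spectral_theorem, hB.1.spectral_theorem]
    rw [← conjStarAlgAut_unitaryKronecker, diagonal_kronecker_diagonal]
    congr 2 with p
    simp [a, b]
  have hlog : (diagonal (RCLike.ofReal ∘ Real.log ∘ fun p : ι × κ => a p.1 * b p.2)) =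
      diagonal (RCLike.ofReal ∘ Real.log ∘ a) ⊗ₖ (1 : Matrix κ κ ℂ) +
        (1 : Matrix ι ι ℂ) ⊗ₖ diagonal (RCLike.ofReal ∘ Real.log ∘ b) := by
    rw [← diagonal_one, ← diagonal_one, diagonal_kronecker_diagonal, diagonal_kronecker_diagonal,
      diagonal_add]
    congr 1 with p
    have ha : a p.1 ≠ 0 := (hA.eigenvalues_pos p.1).ne'
    have hb : b p.2 ≠ 0 := (hB.eigenvalues_pos p.2).ne'
    simp [Real.log_mul ha hb]
  rw [matLog_eq_cfc, hAB, cfc_conjStarAlgAut _ _ (isHermitian_diagonal_ofReal _),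
    cfc_diagonal_ofReal, hlog, map_add, conjStarAlgAut_unitaryKronecker,
    conjStarAlgAut_unitaryKronecker, map_one, map_one, hA.1.matLog_eq, hB.1.matLog_eq]

end Kronecker

section PartialTrace

variable {ι κ : Type*} [Fintype ι] [Fintype κ]

lemma trace_mul_kronecker_one [DecidableEq κ] (M : Matrix (ι × κ) (ι × κ) ℂ) (X : Matrix ι ι ℂ) :
    trace (M * (X ⊗ₖ (1 : Matrix κ κ ℂ))) = trace (ptr₂ M * X) := by
  simp only [trace, diag_apply, mul_apply, kroneckerMap_apply, one_apply, mul_ite, mul_one,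
    mul_zero, Fintype.sum_prod_type, Finset.sum_ite_eq', Finset.mem_univ, if_true, ptr₂, of_apply,
    Finset.sum_mul]
  exact Finset.sum_congr rfl fun _ _ => Finset.sum_comm

lemma trace_mul_one_kronecker [DecidableEq ι] (M : Matrix (ι × κ) (ι × κ) ℂ) (Y : Matrix κ κ ℂ) :
    trace (M * ((1 : Matrix ι ι ℂ) ⊗ₖ Y)) = trace (ptr₁ M * Y) := by
  simp only [trace, diag_apply, mul_apply, kroneckerMap_apply, one_apply, ite_mul, one_mul,
    zero_mul, mul_ite, mul_zero, Fintype.sum_prod_type, Finset.sum_ite_irrel, Finset.sum_const_zero,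
    Finset.sum_ite_eq', Finset.mem_univ, if_true, ptr₁, of_apply, Finset.sum_mul]
  rw [Finset.sum_comm]
  exact Finset.sum_congr rfl fun _ _ => Finset.sum_comm

end PartialTrace

lemma relEnt_eq_sub {n : Type*} [Fintype n] [DecidableEq n] (ρ σ : Matrix n n ℂ) :
    relEnt ρ σ = (trace (ρ * matLog ρ)).re - (trace (ρ * matLog σ)).re := by
  rw [relEnt, mul_sub, trace_sub, Complex.sub_re]

lemma re_trace_mul_matLog_kronecker {ι κ : Type*} [Fintype ι] [Fintype κ] [DecidableEq ι]
    [DecidableEq κ] (ρ : Matrix (ι × κ) (ι × κ) ℂ) {A : Matrix ι ι ℂ} {B : Matrix κ κ ℂ}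
    (hA : A.PosDef) (hB : B.PosDef) :
    (trace (ρ * matLog (A ⊗ₖ B))).re =
      (trace (ptr₂ ρ * matLog A)).re + (trace (ptr₁ ρ * matLog B)).re := by
  rw [matLog_kronecker hA hB, mul_add, trace_add, trace_mul_kronecker_one, trace_mul_one_kronecker,
    Complex.add_re]

theorem relEnt_product_decomposition_general {ι κ : Type*} [Fintype ι] [Fintype κ]
    [DecidableEq ι] [DecidableEq κ]
    (ρ : Matrix (ι × κ) (ι × κ) ℂ)
    (hρA : (ptr₂ ρ).PosDef) (hρB : (ptr₁ ρ).PosDef)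
    (σA : Matrix ι ι ℂ) (σB : Matrix κ κ ℂ)
    (hσA : σA.PosDef) (hσB : σB.PosDef) :
    relEnt ρ (σA ⊗ₖ σB) =
      relEnt ρ (ptr₂ ρ ⊗ₖ ptr₁ ρ) + relEnt (ptr₂ ρ) σA + relEnt (ptr₁ ρ) σB := by
  simp only [relEnt_eq_sub, re_trace_mul_matLog_kronecker ρ hσA hσB,
    re_trace_mul_matLog_kronecker ρ hρA hρB]
  ring

/-- Decomposition of the relative entropy to a product reference state:
`S(ρ ‖ σ_A ⊗ₖ σ_B) = S(ρ ‖ ρ_A ⊗ₖ ρ_B) + S(ρ_A ‖ σ_A) + S(ρ_B ‖ σ_B)`, the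
bipartite instance of the additivity relation `I = M + N`. -/
theorem relEnt_product_decomposition {ι κ : Type*} [Fintype ι] [Fintype κ]
    [DecidableEq ι] [DecidableEq κ] [Nonempty ι] [Nonempty κ]
    (ρ : Matrix (ι × κ) (ι × κ) ℂ) (hρ : ρ.PosDef)
    (hρ1 : Matrix.trace ρ = 1)
    (hρA : (ptr₂ ρ).PosDef) (hρB : (ptr₁ ρ).PosDef)
    (σA : Matrix ι ι ℂ) (σB : Matrix κ κ ℂ)
    (hσA : σA.PosDef) (hσB : σB.PosDef)
    (hσA1 : Matrix.trace σA = 1) (hσB1 : Matrix.trace σB = 1) :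
    relEnt ρ (σA ⊗ₖ σB) =
      relEnt ρ (ptr₂ ρ ⊗ₖ ptr₁ ρ) + relEnt (ptr₂ ρ) σA + relEnt (ptr₁ ρ) σB :=
  relEnt_product_decomposition_general ρ hρA hρB σA σB hσA hσB
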